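/- Let K be a field, G a finite group, and C a nonzero right ideal of KG. Then 2\sqrt{|G|} \leq d(C) + dim_K(C) \leq |G| + 1. -/

import Mathlib

open MonoidAlgebra

attribute [local instance] Classical.propDecidable

/-- Coefficientwise (Schur) product on the group algebra. -/
noncomputable def schur {K G : Type*} [Semiring K] (f g : MonoidAlgebra K G) :
    MonoidAlgebra K G :=
  .ofCoeff (Finsupp.zipWith (· * ·) (mul_zero 0) f.coeff g.coeff)

/-- `C` is a right ideal of the group algebra. -/
def IsRightIdeal {K G : Type*} [Field K] [Group G]
    (C : Submodule K (MonoidAlgebra K G)) : Prop :=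
  ∀ c ∈ C, ∀ v : MonoidAlgebra K G, c * v ∈ C

/-! The right translates `c * g` of a minimum-weight word `c` all lie in `C`, have weight `d`,
and their supports cover `G`. A basis of their span chosen among them has at most `dim C`
elements, and its supports still cover `G`, so `|G| ≤ d · dim C`; AM-GM turns this into
`2√|G| ≤ d + dim C`. For the upper bound, a nonzero word of `C` vanishing on `dim C - 1`
prescribed coordinates exists by counting dimensions (Singleton bound). -/

open Module Submodule Finset

theorem exists_finset_subset_span_eq_card_eq_finrank {K V : Type*} [DivisionRing K]
    [AddCommGroup V] [Module K V] (T : Finset V) :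
    ∃ B ⊆ T, span K (B : Set V) = span K T ∧ #B = finrank K (span K (T : Set V)) := by
  obtain ⟨b, hbT, hspan, hli⟩ := exists_linearIndependent K (T : Set V)
  lift b to Finset V using T.finite_toSet.subset hbT
  exact ⟨b, by exact_mod_cast hbT, hspan, by rw [← hspan, finrank_span_finset_eq_card hli]⟩

namespace MonoidAlgebra

variable {K M : Type*} [Field K]

theorem coeff_support_subset_biUnion_of_mem_span {B : Finset (MonoidAlgebra K M)}
    {v : MonoidAlgebra K M} (hv : v ∈ span K (B : Set (MonoidAlgebra K M))) :
    v.coeff.support ⊆ B.biUnion fun f => f.coeff.support := by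
  have hle : span K (B : Set (MonoidAlgebra K M)) ≤
      supported K K ↑(B.biUnion fun f => f.coeff.support) :=
    span_le.2 fun f hf => mem_supported.2 <| by
      exact_mod_cast subset_biUnion_of_mem (fun f : MonoidAlgebra K M => f.coeff.support) hf
  exact_mod_cast mem_supported.1 (hle hv)

variable [Fintype M]

theorem card_le_mul_finrank_of_support_cover (C : Submodule K (MonoidAlgebra K M))
    (T : Finset (MonoidAlgebra K M)) (hTC : (T : Set (MonoidAlgebra K M)) ⊆ C) {w : ℕ}
    (hw : ∀ f ∈ T, #f.coeff.support ≤ w) (hcover : ∀ m, ∃ f ∈ T, m ∈ f.coeff.support) :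
    Fintype.card M ≤ w * finrank K C := by
  obtain ⟨B, hBT, hspan, hcard⟩ := exists_finset_subset_span_eq_card_eq_finrank (K := K) T
  have hcoverB : (univ : Finset M) ⊆ B.biUnion fun f => f.coeff.support := fun m _ => by
    obtain ⟨f, hfT, hmf⟩ := hcover m
    exact coeff_support_subset_biUnion_of_mem_span (hspan ▸ subset_span hfT) hmf
  calc Fintype.card M ≤ #(B.biUnion fun f => f.coeff.support) := card_le_card hcoverB
    _ ≤ ∑ f ∈ B, #f.coeff.support := card_biUnion_le
    _ ≤ #B * w := sum_le_card_nsmul _ _ _ fun f hf => hw f (hBT hf)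
    _ ≤ finrank K C * w := by
      rw [hcard]
      exact Nat.mul_le_mul_right _ (finrank_mono (span_le.2 hTC))
    _ = w * finrank K C := Nat.mul_comm _ _

theorem exists_ne_zero_card_support_add_finrank_le (C : Submodule K (MonoidAlgebra K M))
    (hC : C ≠ ⊥) : ∃ c ∈ C, c ≠ 0 ∧ #c.coeff.support + finrank K C ≤ Fintype.card M + 1 := by
  have hk : 1 ≤ finrank K C := one_le_finrank_iff.2 hC
  have hkn : finrank K C ≤ Fintype.card M := by
    simpa [finrank_eq_card_basis (MonoidAlgebra.basis M K)] using C.finrank_le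
  obtain ⟨S, -, hS⟩ := exists_subset_card_eq (s := (univ : Finset M)) (n := finrank K C - 1)
    (by rw [card_univ]; omega)
  let restrict : C →ₗ[K] S → K := LinearMap.pi fun s =>
    Finsupp.lapply (s : M) ∘ₗ (coeffLinearEquiv K).toLinearMap ∘ₗ C.subtype
  obtain ⟨⟨c, hcC⟩, hc, hc0⟩ := (Submodule.ne_bot_iff _).1 <| LinearMap.ker_ne_bot_of_finrank_lt
    (f := restrict) (by rw [finrank_pi, Fintype.card_coe, hS]; omega)
  have hsupp : c.coeff.support ⊆ univ \ S := fun m hm => mem_sdiff.2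
    ⟨mem_univ m, fun hmS =>
      Finsupp.mem_support_iff.1 hm (congrFun (LinearMap.mem_ker.1 hc) ⟨m, hmS⟩)⟩
  refine ⟨c, hcC, fun h => hc0 (Subtype.ext h), ?_⟩
  have := card_le_card hsupp
  rw [card_sdiff_of_subset (subset_univ S), card_univ, hS] at this
  omega

end MonoidAlgebra

theorem IsRightIdeal.card_le_card_support_mul_finrank {K G : Type*} [Field K] [Group G]
    [Fintype G] {C : Submodule K (MonoidAlgebra K G)} (hC : IsRightIdeal C)
    {c : MonoidAlgebra K G} (hcC : c ∈ C) (hc0 : c ≠ 0) :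
    Fintype.card G ≤ #c.coeff.support * finrank K C := by
  have hsupp (g : G) :
      (c * single g 1).coeff.support = c.coeff.support.map (mulRightEmbedding g) :=
    support_coeff_mul_single c 1 (by simp) g
  refine card_le_mul_finrank_of_support_cover C (univ.image fun g => c * single g 1) ?_ ?_ ?_
  · simpa [Set.range_subset_iff] using fun g => hC c hcC _
  · simp [hsupp]
  · intro x
    obtain ⟨s, hs⟩ := Finsupp.support_nonempty_iff.2 (mt coeff_eq_zero.1 hc0)
    refine ⟨c * single (s⁻¹ * x) 1, mem_image_of_mem _ (mem_univ _), ?_⟩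
    rw [hsupp]
    exact mem_map.2 ⟨s, hs, by simp⟩

theorem two_mul_sqrt_le_add_of_le_mul {n a b : ℝ} (ha : 0 ≤ a) (hb : 0 ≤ b) (h : n ≤ a * b) :
    2 * √n ≤ a + b := by
  rcases lt_or_ge n 0 with hn | hn
  · rw [Real.sqrt_eq_zero_of_nonpos hn.le]; linarith
  nlinarith [Real.sq_sqrt hn, Real.sqrt_nonneg n, sq_nonneg (a - b)]

/-- `2√|G| ≤ d(C) + dim C ≤ |G| + 1` for a nonzero right ideal `C` of `KG`. -/
theorem stmt3 {K G : Type*} [Field K] [Group G] [Fintype G]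
    (C : Submodule K (MonoidAlgebra K G)) (hI : IsRightIdeal C) (hC : C ≠ ⊥)
    (d : ℕ) (hd : IsLeast {w | ∃ c ∈ C, c ≠ 0 ∧ c.coeff.support.card = w} d) :
    2 * Real.sqrt (Fintype.card G) ≤ (d : ℝ) + Module.finrank K ↥C ∧
      d + Module.finrank K ↥C ≤ Fintype.card G + 1 := by
  obtain ⟨c, hcC, hc0, rfl⟩ := hd.1
  refine ⟨two_mul_sqrt_le_add_of_le_mul (by positivity) (by positivity) ?_, ?_⟩
  · exact_mod_cast hI.card_le_card_support_mul_finrank hcC hc0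
  · obtain ⟨c', hc'C, hc'0, hc'⟩ := MonoidAlgebra.exists_ne_zero_card_support_add_finrank_le C hC
    have := hd.2 ⟨c', hc'C, hc'0, rfl⟩
    omega
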